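/- Let N ≥ 1 be an integer and let ε_1, …, ε_n be integers with ε_i ≥ N for all i. Then the Lebesgue measure of the fundamental interval satisfies N^{n+1}/((1+N)·q_n²) ≤ |I_n(ε_1, …, ε_n)| ≤ N^n/q_n², where q_n is the convergent denominator built from ε_1, …, ε_n. -/

import Mathlib

open MeasureTheory Filter Set
open scoped ENNReal

/-- The `N`-expansion map `T_N : [0,1] → [0,1]`,
`T_N x = N/x - ⌊N/x⌋` for `x ≠ 0`, `T_N 0 = 0`. -/
noncomputable def TN (N : ℕ) (x : ℝ) : ℝ :=
  if x = 0 then 0 else (N : ℝ) / x - (⌊(N : ℝ) / x⌋ : ℝ)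

/-- `digit N n x` is the `(n+1)`-st digit `ε_{n+1}(x)` of the `N`-expansion of `x`,
i.e. `ε_m(x) = digit N (m-1) x` for `m ≥ 1`. -/
noncomputable def digit (N : ℕ) (n : ℕ) (x : ℝ) : ℤ :=
  ⌊(N : ℝ) / ((TN N)^[n] x)⌋

/-- The set `E_M` of irrationals in `(0,1)` all of whose `N`-expansion digits lie in
`{N, …, M}`. -/
noncomputable def EM (N M : ℕ) : Set ℝ :=
  {x | x ∈ Set.Ioo (0 : ℝ) 1 ∧ Irrational x ∧
    ∀ n : ℕ, (N : ℤ) ≤ digit N n x ∧ digit N n x ≤ (M : ℤ)}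

/-- The set `F_{α,N}` of irrationals in `(0,1)` all of whose `N`-expansion digits
are at least `α`. -/
noncomputable def Fset (N : ℕ) (α : ℝ) : Set ℝ :=
  {x | x ∈ Set.Ioo (0 : ℝ) 1 ∧ Irrational x ∧ ∀ n : ℕ, α ≤ (digit N n x : ℝ)}

/-- The set `F_N` of irrationals in `(0,1)` whose `N`-expansion digits tend to infinity. -/
noncomputable def FNset (N : ℕ) : Set ℝ :=
  {x | x ∈ Set.Ioo (0 : ℝ) 1 ∧ Irrational x ∧
    Filter.Tendsto (fun n => digit N n x) Filter.atTop Filter.atTop}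

/-- Convergent denominators of the `N`-expansion with digit sequence `ε`
(where `ε i` is the `(i+1)`-st digit `ε_{i+1}`), shifted by one:
`qden N ε (n+1) = q_n`, so `qden N ε 0 = q_{-1} = 0`, `qden N ε 1 = q_0 = 1`,
and `q_n = ε_n q_{n-1} + N q_{n-2}`. -/
def qden (N : ℕ) (ε : ℕ → ℤ) : ℕ → ℤ
  | 0 => 0
  | 1 => 1
  | (n + 2) => ε n * qden N ε (n + 1) + (N : ℤ) * qden N ε n

/-- Convergent numerators of the `N`-expansion with digit sequence `ε`, shifted by one:
`pnum N ε (n+1) = p_n`, so `pnum N ε 0 = p_{-1} = 1`, `pnum N ε 1 = p_0 = 0`,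
and `p_n = ε_n p_{n-1} + N p_{n-2}`. -/
def pnum (N : ℕ) (ε : ℕ → ℤ) : ℕ → ℤ
  | 0 => 1
  | 1 => 0
  | (n + 2) => ε n * pnum N ε (n + 1) + (N : ℤ) * pnum N ε n

/-- The fundamental interval `I_n(ε_1, …, ε_n)`: irrationals in `(0,1)` whose first `n`
`N`-expansion digits are `ε 0, …, ε (n-1)` (i.e. `ε_i(x) = ε (i-1)` for `1 ≤ i ≤ n`). -/
noncomputable def fundInterval (N : ℕ) (n : ℕ) (ε : ℕ → ℤ) : Set ℝ :=
  {x | x ∈ Set.Ioo (0 : ℝ) 1 ∧ Irrational x ∧ ∀ i < n, digit N i x = ε i}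

/-!
Peeling off the first digit, `x ↦ N / x - ε₁` maps `I_{n+1}(ε₁, ε₂, …)` onto `I_n(ε₂, …)`,
with inverse `t ↦ N / (ε₁ + t)`. This inverse preserves betweenness, so by induction `I_n` is
the set of irrationals strictly between `p_n / q_n` and `(p_n + p_{n-1}) / (q_n + q_{n-1})`.
The determinant identity `p_{n-1} q_n - p_n q_{n-1} = (-N)ⁿ` then gives
`|I_n| = Nⁿ / (q_n (q_n + q_{n-1}))`, and `0 ≤ N q_{n-1} ≤ q_n` gives both bounds.
-/

section Betweenness

theorem mem_uIoo_iff_sub_mul_sub_neg {R : Type*} [CommRing R] [LinearOrder R] [IsStrictOrderedRing R]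
    {a b x : R} : x ∈ uIoo a b ↔ (x - a) * (x - b) < 0 := by
  rcases le_total a b with h | h
  · rw [uIoo_of_le h, mem_Ioo, mul_neg_iff]
    constructor
    · rintro ⟨h1, h2⟩; left; constructor <;> linarith
    · rintro (⟨h1, h2⟩ | ⟨h1, h2⟩) <;> constructor <;> linarith
  · rw [uIoo_of_ge h, mem_Ioo, mul_neg_iff]
    constructor
    · rintro ⟨h1, h2⟩; right; constructor <;> linarith
    · rintro (⟨h1, h2⟩ | ⟨h1, h2⟩) <;> constructor <;> linarith

theorem div_add_mem_uIoo_iff {𝕜 : Type*} [Field 𝕜] [LinearOrder 𝕜] [IsStrictOrderedRing 𝕜]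
    {K c a b y : 𝕜} (hK : K ≠ 0) (ha : 0 < c + a) (hb : 0 < c + b)
    (hy : 0 < c + y) :
    K / (c + y) ∈ uIoo (K / (c + a)) (K / (c + b)) ↔ y ∈ uIoo a b := by
  have hD : 0 < K ^ 2 / ((c + y) ^ 2 * (c + a) * (c + b)) := by positivity
  have key : (K / (c + y) - K / (c + a)) * (K / (c + y) - K / (c + b))
      = K ^ 2 / ((c + y) ^ 2 * (c + a) * (c + b)) * ((y - a) * (y - b)) := by
    field_simp
    ring
  rw [mem_uIoo_iff_sub_mul_sub_neg, mem_uIoo_iff_sub_mul_sub_neg, key, ← smul_eq_mul,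
    smul_neg_iff_of_pos_left hD]

end Betweenness

section Convergents

variable {N : ℕ} {ε : ℕ → ℤ}

theorem qden_nonneg (hε : ∀ i, 0 ≤ ε i) : ∀ n, 0 ≤ qden N ε n
  | 0 => le_rfl
  | 1 => zero_le_one
  | n + 2 => by
    have := qden_nonneg hε n
    have := qden_nonneg hε (n + 1)
    have := hε n
    rw [qden]
    positivity

theorem one_le_qden_succ (hε : ∀ i, 1 ≤ ε i) : ∀ n, 1 ≤ qden N ε (n + 1)
  | 0 => le_rfl
  | n + 1 => by
    have := one_le_qden_succ hε n
    have := qden_nonneg (N := N) (fun i => zero_le_one.trans (hε i)) n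
    have := hε n
    rw [qden]
    nlinarith

theorem natCast_mul_qden_le_qden_succ (hε : ∀ i, (N : ℤ) ≤ ε i) (n : ℕ) :
    (N : ℤ) * qden N ε n ≤ qden N ε (n + 1) := by
  cases n with
  | zero => simp [qden]
  | succ n =>
    have hε0 : ∀ i, 0 ≤ ε i := fun i => (Int.natCast_nonneg N).trans (hε i)
    have := qden_nonneg (N := N) hε0 n
    have := qden_nonneg (N := N) hε0 (n + 1)
    have := hε n
    rw [qden]
    nlinarith

theorem qden_succ_add_mul_qden_pos (hε : ∀ i, 1 ≤ ε i) (n : ℕ) {t : ℝ} (ht : 0 ≤ t) :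
    0 < (qden N ε (n + 1) : ℝ) + t * qden N ε n := by
  have h1 : (1 : ℝ) ≤ qden N ε (n + 1) := by exact_mod_cast one_le_qden_succ hε n
  have h0 : (0 : ℝ) ≤ qden N ε n := by
    exact_mod_cast qden_nonneg (fun i => zero_le_one.trans (hε i)) n
  positivity

theorem pnum_succ_eq_mul_qden_tail :
    ∀ n, pnum N ε (n + 1) = N * qden N (fun i => ε (i + 1)) n
  | 0 => by simp [pnum, qden]
  | 1 => by simp [pnum, qden]
  | n + 2 => by
    rw [pnum, qden, pnum_succ_eq_mul_qden_tail n, pnum_succ_eq_mul_qden_tail (n + 1)]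
    ring

theorem qden_succ_eq_pnum_tail_add :
    ∀ n, qden N ε (n + 1) = pnum N (fun i => ε (i + 1)) n + ε 0 * qden N (fun i => ε (i + 1)) n
  | 0 => by simp [pnum, qden]
  | 1 => by simp [pnum, qden]
  | n + 2 => by
    rw [qden.eq_3, pnum.eq_3, qden.eq_3 N (fun i => ε (i + 1))]
    linear_combination ε (n + 1) * qden_succ_eq_pnum_tail_add (n + 1) +
      N * qden_succ_eq_pnum_tail_add n

theorem pnum_mul_qden_succ_sub_pnum_succ_mul_qden (n : ℕ) :
    pnum N ε n * qden N ε (n + 1) - pnum N ε (n + 1) * qden N ε n = (-(N : ℤ)) ^ n := by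
  induction n with
  | zero => simp [pnum, qden]
  | succ n ih =>
    rw [pnum, qden, pow_succ]
    linear_combination (-(N : ℤ)) * ih

/-- The Möbius map `t ↦ (p_n + p_{n-1} t) / (q_n + q_{n-1} t)`; every `x ∈ I_n(ε₁, …, ε_n)`
equals `cylinderMap N ε n (T_Nⁿ x)`. -/
noncomputable def cylinderMap (N : ℕ) (ε : ℕ → ℤ) (n : ℕ) (t : ℝ) : ℝ :=
  (pnum N ε (n + 1) + t * pnum N ε n) / (qden N ε (n + 1) + t * qden N ε n)

theorem cylinderMap_zero (t : ℝ) : cylinderMap N ε 0 t = t := by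
  simp [cylinderMap, pnum, qden]

theorem cylinderMap_succ {n : ℕ} {t : ℝ}
    (ht : (qden N (fun i => ε (i + 1)) (n + 1) : ℝ) + t * qden N (fun i => ε (i + 1)) n ≠ 0) :
    cylinderMap N ε (n + 1) t = N / (ε 0 + cylinderMap N (fun i => ε (i + 1)) n t) := by
  rw [cylinderMap, cylinderMap, pnum_succ_eq_mul_qden_tail (ε := ε) (n + 1),
    pnum_succ_eq_mul_qden_tail (ε := ε) n, qden_succ_eq_pnum_tail_add (ε := ε) (n + 1),
    qden_succ_eq_pnum_tail_add (ε := ε) n]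
  push_cast
  rw [add_div' _ _ _ ht, div_div_eq_mul_div]
  ring

theorem cylinderMap_mem_Icc (hN : 1 ≤ N) (hε : ∀ i, (N : ℤ) ≤ ε i) (n : ℕ) {t : ℝ}
    (ht : t ∈ Icc (0 : ℝ) 1) : cylinderMap N ε n t ∈ Icc (0 : ℝ) 1 := by
  induction n generalizing ε with
  | zero => rwa [cylinderMap_zero]
  | succ n ih =>
    have hε1 : ∀ i, 1 ≤ ε i := fun i => (Nat.one_le_cast.2 hN).trans (hε i)
    rw [cylinderMap_succ (qden_succ_add_mul_qden_pos (fun i => hε1 (i + 1)) n ht.1).ne']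
    obtain ⟨hc0, -⟩ := ih (fun i => hε (i + 1))
    have hN0 : (N : ℝ) ≤ ε 0 := by exact_mod_cast hε 0
    have hNpos : (0 : ℝ) < N := by exact_mod_cast hN
    exact ⟨div_nonneg hNpos.le (by linarith), (div_le_one (by linarith)).2 (by linarith)⟩

end Convergents

section FundamentalInterval

variable {N : ℕ} {ε : ℕ → ℤ}

theorem digit_succ (i : ℕ) (x : ℝ) : digit N (i + 1) x = digit N i (TN N x) := by
  rw [digit, digit, Function.iterate_succ_apply]

theorem TN_of_floor_eq {x : ℝ} {k : ℤ} (hx : x ≠ 0) (hk : ⌊(N : ℝ) / x⌋ = k) :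
    TN N x = N / x - k := by
  rw [TN, if_neg hx, hk]

theorem mem_fundInterval_succ_iff (hN : N ≠ 0) (hε0 : (N : ℤ) ≤ ε 0) {n : ℕ} {x : ℝ} :
    x ∈ fundInterval N (n + 1) ε ↔
      0 < x ∧ N / x - ε 0 ∈ fundInterval N n (fun i => ε (i + 1)) := by
  constructor
  · rintro ⟨⟨hx0, -⟩, hirr, hdig⟩
    have hfl : ⌊(N : ℝ) / x⌋ = ε 0 := hdig 0 n.succ_pos
    have hyirr : Irrational (N / x - ε 0) :=
      irrational_sub_intCast_iff.2 (irrational_natCast_div_iff.2 ⟨hN, hirr⟩)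
    refine ⟨hx0, ⟨⟨?_, ?_⟩, hyirr, fun i hi => ?_⟩⟩
    · refine lt_of_le_of_ne ?_ hyirr.ne_zero.symm
      rw [← hfl]
      exact Int.fract_nonneg _
    · rw [← hfl]
      exact Int.fract_lt_one _
    · rw [← TN_of_floor_eq hx0.ne' hfl, ← digit_succ]
      exact hdig (i + 1) (by omega)
  · rintro ⟨hx0, ⟨⟨hy0, hy1⟩, hyirr, hdig⟩⟩
    have hfl : ⌊(N : ℝ) / x⌋ = ε 0 := Int.floor_eq_iff.2 ⟨by linarith, by linarith⟩
    refine ⟨⟨hx0, ?_⟩, (irrational_natCast_div_iff.1 (irrational_sub_intCast_iff.1 hyirr)).2, ?_⟩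
    · have hNx : (N : ℝ) < N / x := by
        have : (N : ℝ) ≤ ε 0 := by exact_mod_cast hε0
        linarith
      rwa [lt_div_iff₀ hx0, mul_lt_iff_lt_one_right (by positivity)] at hNx
    · rintro (_ | i) hi
      · exact hfl
      · rw [digit_succ, TN_of_floor_eq hx0.ne' hfl]
        exact hdig i (by omega)

theorem fundInterval_eq_uIoo_diff (hN : 1 ≤ N) (hε : ∀ i, (N : ℤ) ≤ ε i) (n : ℕ) :
    fundInterval N n ε =
      uIoo (cylinderMap N ε n 0) (cylinderMap N ε n 1) \ range ((↑) : ℚ → ℝ) := by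
  induction n generalizing ε with
  | zero =>
    ext x
    simp [fundInterval, cylinderMap_zero, Irrational]
  | succ n ih =>
    have hε' : ∀ i, (N : ℤ) ≤ ε (i + 1) := fun i => hε (i + 1)
    have hε1 : ∀ i, 1 ≤ ε (i + 1) := fun i => (Nat.one_le_cast.2 hN).trans (hε' i)
    have hNpos : (0 : ℝ) < N := by exact_mod_cast hN
    have hc : (1 : ℝ) ≤ ε 0 := by exact_mod_cast (Nat.one_le_cast.2 hN).trans (hε 0)
    have ha := cylinderMap_mem_Icc hN hε' n (t := 0) ⟨le_rfl, zero_le_one⟩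
    have hb := cylinderMap_mem_Icc hN hε' n (t := 1) ⟨zero_le_one, le_rfl⟩
    ext x
    rw [mem_fundInterval_succ_iff (by omega) (hε 0), ih hε',
      cylinderMap_succ (qden_succ_add_mul_qden_pos hε1 n le_rfl).ne',
      cylinderMap_succ (qden_succ_add_mul_qden_pos hε1 n zero_le_one).ne']
    set a := cylinderMap N (fun i => ε (i + 1)) n 0
    set b := cylinderMap N (fun i => ε (i + 1)) n 1
    have hirr : Irrational (N / x - ε 0) ↔ Irrational x :=
      irrational_sub_intCast_iff.trans (irrational_natCast_div_iff.trans (and_iff_right (by omega)))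
    have hinv (hx : 0 < x) :
        N / (ε 0 + (N / x - ε 0)) ∈ uIoo (N / (ε 0 + a)) (N / (ε 0 + b)) ↔
          N / x - ε 0 ∈ uIoo a b :=
      div_add_mem_uIoo_iff hNpos.ne' (by linarith [ha.1]) (by linarith [hb.1])
        (by rw [add_sub_cancel]; positivity)
    have hxy : (N : ℝ) / (ε 0 + (N / x - ε 0)) = x := by
      rw [add_sub_cancel, div_div_cancel₀ hNpos.ne']
    constructor
    · rintro ⟨hx, hy, hyirr⟩
      exact ⟨hxy ▸ (hinv hx).2 hy, hirr.1 hyirr⟩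
    · rintro ⟨hx, hxirr⟩
      have hx0 : 0 < x := lt_of_le_of_lt
        (le_min (div_nonneg hNpos.le (by linarith [ha.1]))
          (div_nonneg hNpos.le (by linarith [hb.1]))) hx.1
      exact ⟨hx0, (hinv hx0).1 (by rwa [hxy]), hirr.2 hxirr⟩

theorem volume_fundInterval (hN : 1 ≤ N) (hε : ∀ i, (N : ℤ) ≤ ε i) (n : ℕ) :
    volume (fundInterval N n ε) = ENNReal.ofReal ((N : ℝ) ^ n /
      ((qden N ε (n + 1) : ℝ) * (qden N ε (n + 1) + qden N ε n))) := by
  rw [fundInterval_eq_uIoo_diff hN hε, measure_sdiff_null ((countable_range _).measure_zero _),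
    Real.volume_uIoo]
  congr 1
  have hε1 : ∀ i, 1 ≤ ε i := fun i => (Nat.one_le_cast.2 hN).trans (hε i)
  have hq := qden_succ_add_mul_qden_pos (N := N) hε1 n (t := 0) le_rfl
  have hq' := qden_succ_add_mul_qden_pos (N := N) hε1 n (t := 1) zero_le_one
  have hdet : (pnum N ε n * qden N ε (n + 1) - pnum N ε (n + 1) * qden N ε n : ℝ) =
      (-(N : ℝ)) ^ n := by
    exact_mod_cast pnum_mul_qden_succ_sub_pnum_succ_mul_qden n
  simp only [zero_mul, add_zero, one_mul] at hq hq'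
  simp only [cylinderMap, zero_mul, add_zero, one_mul]
  have hdiff : (pnum N ε (n + 1) + pnum N ε n : ℝ) / (qden N ε (n + 1) + qden N ε n) -
      pnum N ε (n + 1) / qden N ε (n + 1) =
        (-(N : ℝ)) ^ n / (qden N ε (n + 1) * (qden N ε (n + 1) + qden N ε n)) := by
    rw [div_sub_div _ _ hq'.ne' hq.ne', ← hdet]
    ring
  rw [hdiff, abs_div, abs_pow, abs_neg, Nat.abs_cast, abs_of_pos (mul_pos hq hq')]

end FundamentalInterval

/-- Two-sided bounds for the length of a fundamental interval:
`N^{n+1} / ((1+N) q_n²) ≤ |I_n(ε_1, …, ε_n)| ≤ N^n / q_n²`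
(recall `qden N ε (n+1) = q_n`). -/
theorem stmt_13 (N : ℕ) (hN : 1 ≤ N) (n : ℕ) (ε : ℕ → ℤ) (hε : ∀ i, (N : ℤ) ≤ ε i) :
    ENNReal.ofReal ((N : ℝ) ^ (n + 1) / ((1 + (N : ℝ)) * (qden N ε (n + 1) : ℝ) ^ 2))
        ≤ volume (fundInterval N n ε) ∧
      volume (fundInterval N n ε) ≤
        ENNReal.ofReal ((N : ℝ) ^ n / (qden N ε (n + 1) : ℝ) ^ 2) := by
  have hNpos : (0 : ℝ) < N := by exact_mod_cast hN
  have hq : (1 : ℝ) ≤ qden N ε (n + 1) := by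
    exact_mod_cast one_le_qden_succ (fun i => (Nat.one_le_cast.2 hN).trans (hε i)) n
  have hq0 : (0 : ℝ) ≤ qden N ε n := by
    exact_mod_cast qden_nonneg (fun i => (Int.natCast_nonneg N).trans (hε i)) n
  have hNq : (N : ℝ) * qden N ε n ≤ qden N ε (n + 1) := by
    exact_mod_cast natCast_mul_qden_le_qden_succ hε n
  rw [volume_fundInterval hN hε n]
  refine ⟨ENNReal.ofReal_le_ofReal ?_, ENNReal.ofReal_le_ofReal ?_⟩
  · calc (N : ℝ) ^ (n + 1) / ((1 + N) * (qden N ε (n + 1) : ℝ) ^ 2)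
        = N ^ n / (qden N ε (n + 1) * (qden N ε (n + 1) + qden N ε (n + 1) / N)) := by
          field_simp
          ring
      _ ≤ N ^ n / (qden N ε (n + 1) * (qden N ε (n + 1) + qden N ε n)) := by
          gcongr
          rwa [le_div_iff₀ hNpos, mul_comm]
  · calc (N : ℝ) ^ n / (qden N ε (n + 1) * (qden N ε (n + 1) + qden N ε n))
        ≤ N ^ n / (qden N ε (n + 1) * qden N ε (n + 1)) := by gcongr; linarith
      _ = N ^ n / (qden N ε (n + 1)) ^ 2 := by ring
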